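/- arXiv:2411.18408 — 4 statements merged into one kernel-verified Lean document; each statement's English description precedes it below -/
import Mathlib

section
/- There is a universal constant C such that the following holds. Let A>0 and let g:ℝ³×ℝ³→ℝ satisfy |g(y,w)| ≤ A⟨y,w⟩^{−10} for all y,w∈ℝ³. Let t≥0, x∈ℝ³, and let Y,W:ℝ³→ℝ³ be any measurable functions with |Y(v)| ≤ 1 and |W(v)| ≤ 1 for all v. Then ∫_{ℝ³} |g( x−tv+Y(v), v+W(v) )| ⟨v⟩² dv ≤ C A ⟨t,x⟩^{−3}. -/
open MeasureTheory Real

noncomputable section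

abbrev E3 := EuclideanSpace ℝ (Fin 3)

/-- The space-time Japanese bracket `⟨t,x⟩ = (1+t²+|x|²)^{1/2}`. -/
def jtx (t : ℝ) (x : E3) : ℝ := Real.sqrt (1 + t ^ 2 + ‖x‖ ^ 2)

/-- The Japanese bracket `⟨v⟩ = (1+|v|²)^{1/2}`. -/
def jv (v : E3) : ℝ := Real.sqrt (1 + ‖v‖ ^ 2)

/-- The phase-space Japanese bracket `⟨y,w⟩ = (1+|y|²+|w|²)^{1/2}`. -/
def jxv (y w : E3) : ℝ := Real.sqrt (1 + ‖y‖ ^ 2 + ‖w‖ ^ 2)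

/-!
Since `Y` and `W` shift by at most `1`, the bracket `⟨y,w⟩` at the point where `g` is evaluated
dominates both `⟨x - tv⟩/2` and `⟨v⟩/2`. The triangle inequality for `(1, t, x)` gives
`⟨t,x⟩ ≤ ⟨x - tv⟩ + t⟨v⟩`, hence `⟨t,x⟩³ ≤ 4(⟨x - tv⟩³ + t³⟨v⟩³)`, and distributing the decay
`⟨y,w⟩^{-10}` accordingly bounds the integrand by `2¹² A ⟨t,x⟩^{-3} (⟨v⟩^{-5} + t³⟨x - tv⟩^{-5})`.
Both terms integrate to at most `∫ ⟨v⟩^{-5}`, the second after the substitution `u = x - tv`,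
whose Jacobian is `t³`.
-/

lemma jv_pos (v : E3) : 0 < jv v := Real.sqrt_pos.mpr (by positivity)

lemma jtx_pos (t : ℝ) (x : E3) : 0 < jtx t x := Real.sqrt_pos.mpr (by positivity)

lemma jxv_pos (y w : E3) : 0 < jxv y w := Real.sqrt_pos.mpr (by positivity)

lemma norm_le_jv (v : E3) : ‖v‖ ≤ jv v :=
  Real.le_sqrt_of_sq_le (by linarith)

lemma jv_le_jxv_left (y w : E3) : jv y ≤ jxv y w :=
  Real.sqrt_le_sqrt (by nlinarith [sq_nonneg ‖w‖])

lemma jv_le_jxv_right (y w : E3) : jv w ≤ jxv y w :=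
  Real.sqrt_le_sqrt (by nlinarith [sq_nonneg ‖y‖])

lemma jv_le_jv_add_norm_sub (a b : E3) : jv a ≤ jv b + ‖a - b‖ := by
  have hab : ‖a‖ ≤ ‖b‖ + ‖a - b‖ := norm_le_insert' a b
  have hb : ‖b‖ ≤ jv b := norm_le_jv b
  have hjb : jv b ^ 2 = 1 + ‖b‖ ^ 2 := Real.sq_sqrt (by positivity)
  refine Real.sqrt_le_iff.mpr ⟨by positivity [jv_pos b], ?_⟩
  nlinarith [norm_nonneg a, norm_nonneg (a - b), norm_nonneg b]

lemma jv_le_two_mul_jv {a b : E3} (h : ‖a - b‖ ≤ 1) : jv a ≤ 2 * jv b := by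
  have : 1 ≤ jv b := Real.one_le_sqrt.mpr (by nlinarith [sq_nonneg ‖b‖])
  linarith [jv_le_jv_add_norm_sub a b]

lemma jtx_le_jv_sub_smul_add {t : ℝ} (ht : 0 ≤ t) (x v : E3) :
    jtx t x ≤ jv (x - t • v) + t * jv v := by
  set D := jv (x - t • v)
  set V := jv v
  have hx : ‖x‖ ≤ ‖x - t • v‖ + t * ‖v‖ := by
    simpa [norm_smul, abs_of_nonneg ht, add_comm] using norm_le_insert' x (t • v)
  have hD : D ^ 2 = 1 + ‖x - t • v‖ ^ 2 := Real.sq_sqrt (by positivity)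
  have hV : V ^ 2 = 1 + ‖v‖ ^ 2 := Real.sq_sqrt (by positivity)
  have hDV : ‖x - t • v‖ * ‖v‖ ≤ D * V :=
    mul_le_mul (norm_le_jv _) (norm_le_jv v) (norm_nonneg v) (jv_pos _).le
  refine Real.sqrt_le_iff.mpr ⟨by positivity [jv_pos (x - t • v), jv_pos v], ?_⟩
  nlinarith [norm_nonneg x, norm_nonneg (x - t • v), norm_nonneg v]

lemma sq_mul_inv_pow_ten_le {D V J T t : ℝ} (hD : 0 < D) (hV : 0 < V) (hT : 0 < T) (ht : 0 ≤ t)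
    (hDJ : D ≤ 2 * J) (hVJ : V ≤ 2 * J) (hTDV : T ≤ D + t * V) :
    V ^ 2 * (J ^ 10)⁻¹ ≤ 2 ^ 12 * (T ^ 3)⁻¹ * ((V ^ 5)⁻¹ + t ^ 3 * (D ^ 5)⁻¹) := by
  have hJ : 0 < J := by linarith
  have hT3 : T ^ 3 ≤ 4 * (D ^ 3 + (t * V) ^ 3) :=
    (pow_le_pow_left₀ hT.le hTDV 3).trans
      ((add_pow_le hD.le (by positivity) 3).trans_eq (by norm_num))
  have hD3V2 : D ^ 3 * V ^ 2 ≤ 2 ^ 10 * J ^ 10 * (V ^ 5)⁻¹ := by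
    rw [le_mul_inv_iff₀ (by positivity)]
    calc D ^ 3 * V ^ 2 * V ^ 5 = D ^ 3 * V ^ 7 := by ring
      _ ≤ (2 * J) ^ 3 * (2 * J) ^ 7 := by gcongr
      _ = 2 ^ 10 * J ^ 10 := by ring
  have hV5 : V ^ 5 ≤ 2 ^ 10 * J ^ 10 * (D ^ 5)⁻¹ := by
    rw [le_mul_inv_iff₀ (by positivity)]
    calc V ^ 5 * D ^ 5 ≤ (2 * J) ^ 5 * (2 * J) ^ 5 := by gcongr
      _ = 2 ^ 10 * J ^ 10 := by ring
  have key : V ^ 2 * T ^ 3 ≤ 2 ^ 12 * J ^ 10 * ((V ^ 5)⁻¹ + t ^ 3 * (D ^ 5)⁻¹) :=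
    calc V ^ 2 * T ^ 3 ≤ V ^ 2 * (4 * (D ^ 3 + (t * V) ^ 3)) := by gcongr
      _ = 4 * (D ^ 3 * V ^ 2 + t ^ 3 * V ^ 5) := by ring
      _ ≤ 4 * (2 ^ 10 * J ^ 10 * (V ^ 5)⁻¹ + t ^ 3 * (2 ^ 10 * J ^ 10 * (D ^ 5)⁻¹)) := by
        gcongr
      _ = 2 ^ 12 * J ^ 10 * ((V ^ 5)⁻¹ + t ^ 3 * (D ^ 5)⁻¹) := by ring
  calc V ^ 2 * (J ^ 10)⁻¹ = V ^ 2 * T ^ 3 * ((J ^ 10)⁻¹ * (T ^ 3)⁻¹) := by field_simp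
    _ ≤ 2 ^ 12 * J ^ 10 * ((V ^ 5)⁻¹ + t ^ 3 * (D ^ 5)⁻¹) * ((J ^ 10)⁻¹ * (T ^ 3)⁻¹) := by
      gcongr
    _ = 2 ^ 12 * (T ^ 3)⁻¹ * ((V ^ 5)⁻¹ + t ^ 3 * (D ^ 5)⁻¹) := by field_simp

lemma abs_mul_jv_sq_le {A t : ℝ} {g : E3 → E3 → ℝ} (hA : 0 ≤ A)
    (hg : ∀ y w, |g y w| ≤ A * (jxv y w ^ 10)⁻¹) (ht : 0 ≤ t) (x v e e' : E3)
    (he : ‖e‖ ≤ 1) (he' : ‖e'‖ ≤ 1) :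
    |g (x - t • v + e) (v + e')| * jv v ^ 2 ≤
      2 ^ 12 * A * (jtx t x ^ 3)⁻¹ * ((jv v ^ 5)⁻¹ + t ^ 3 * (jv (x - t • v) ^ 5)⁻¹) := by
  set y := x - t • v + e
  set w := v + e'
  have hDJ : jv (x - t • v) ≤ 2 * jxv y w :=
    (jv_le_two_mul_jv (b := y) (by rwa [sub_add_cancel_left, norm_neg])).trans
      (by gcongr; exact jv_le_jxv_left y w)
  have hVJ : jv v ≤ 2 * jxv y w :=
    (jv_le_two_mul_jv (b := w) (by rwa [sub_add_cancel_left, norm_neg])).trans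
      (by gcongr; exact jv_le_jxv_right y w)
  calc |g y w| * jv v ^ 2 ≤ A * (jxv y w ^ 10)⁻¹ * jv v ^ 2 := by gcongr; exact hg y w
    _ = A * (jv v ^ 2 * (jxv y w ^ 10)⁻¹) := by ring
    _ ≤ A * (2 ^ 12 * (jtx t x ^ 3)⁻¹ * ((jv v ^ 5)⁻¹ + t ^ 3 * (jv (x - t • v) ^ 5)⁻¹)) :=
      mul_le_mul_of_nonneg_left (sq_mul_inv_pow_ten_le (jv_pos _) (jv_pos v) (jtx_pos t x) ht
        hDJ hVJ (jtx_le_jv_sub_smul_add ht x v)) hA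
    _ = _ := by ring

lemma integrable_inv_jv_pow {n : ℕ} (hn : 3 < n) : Integrable fun v : E3 => (jv v ^ n)⁻¹ := by
  convert integrable_rpow_neg_one_add_norm_sq (E := E3) (μ := volume) (r := n) (by simpa)
    using 2 with v
  rw [jv, Real.sqrt_eq_rpow, ← Real.rpow_natCast, ← Real.rpow_mul (by positivity),
    ← Real.rpow_neg (by positivity)]
  ring_nf

-- For `t = 0` both sides vanish: the left one integrates a constant over all of `ℝ³`.
lemma integral_comp_sub_smul (φ : E3 → ℝ) (x : E3) (t : ℝ) :
    ∫ v, φ (x - t • v) = |t ^ 3|⁻¹ * ∫ v, φ v := by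
  simpa [integral_sub_left_eq_self] using
    Measure.integral_comp_smul volume (fun u => φ (x - u)) t

lemma integrable_pow_mul_comp_sub_smul {φ : E3 → ℝ} (hφ : Integrable φ) (x : E3) (t : ℝ) :
    Integrable fun v => t ^ 3 * φ (x - t • v) := by
  rcases eq_or_ne t 0 with rfl | ht
  · simp
  · exact ((hφ.comp_sub_left x).comp_smul ht).const_mul _

lemma integral_pow_mul_comp_sub_smul_le {φ : E3 → ℝ} (hφ : 0 ≤ φ) (x : E3) {t : ℝ} (ht : 0 ≤ t) :
    ∫ v, t ^ 3 * φ (x - t • v) ≤ ∫ v, φ v := by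
  rw [integral_const_mul, integral_comp_sub_smul, ← mul_assoc, abs_of_nonneg (by positivity)]
  rcases eq_or_lt_of_le ht with rfl | ht
  · simpa using integral_nonneg hφ
  · rw [mul_inv_cancel₀ (by positivity), one_mul]

/-- There is a universal constant `C` such that: if `A > 0`,
`|g(y,w)| ≤ A⟨y,w⟩^{−10}`, `t ≥ 0`, `x ∈ ℝ³`, and `Y, W : ℝ³ → ℝ³` are measurable with
`|Y(v)| ≤ 1`, `|W(v)| ≤ 1`, then
`∫_{ℝ³} |g(x−tv+Y(v), v+W(v))| ⟨v⟩² dv ≤ C A ⟨t,x⟩^{−3}`. -/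
theorem stmt3 :
    ∃ C : ℝ, 0 < C ∧
      ∀ (A : ℝ), 0 < A → ∀ g : E3 → E3 → ℝ,
        (∀ y w : E3, |g y w| ≤ A * jxv y w ^ (-(10:ℝ))) →
        ∀ t : ℝ, 0 ≤ t → ∀ x : E3, ∀ Y W : E3 → E3,
          Measurable Y → Measurable W →
          (∀ v : E3, ‖Y v‖ ≤ 1) → (∀ v : E3, ‖W v‖ ≤ 1) →
          (∫ v : E3, |g (x - t • v + Y v) (v + W v)| * jv v ^ 2) ≤
            C * A * jtx t x ^ (-(3:ℝ)) := by
  set φ : E3 → ℝ := fun v => (jv v ^ 5)⁻¹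
  have hφ : Integrable φ := integrable_inv_jv_pow (by norm_num)
  have hφ0 : 0 ≤ φ := fun v => by positivity [jv_pos v]
  set I := ∫ v, φ v
  have hI : 0 ≤ I := integral_nonneg hφ0
  refine ⟨2 ^ 13 * I + 1, by positivity, ?_⟩
  intro A hA g hg t ht x Y W _ _ hY hW
  have hg' : ∀ y w, |g y w| ≤ A * (jxv y w ^ 10)⁻¹ := fun y w => by
    simpa only [Real.rpow_neg (jxv_pos y w).le, Real.rpow_ofNat] using hg y w
  rw [Real.rpow_neg (jtx_pos t x).le, Real.rpow_ofNat]
  set T := (jtx t x ^ 3)⁻¹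
  have hT : 0 ≤ T := by positivity [jtx_pos t x]
  have hψ := integrable_pow_mul_comp_sub_smul hφ x t
  calc ∫ v, |g (x - t • v + Y v) (v + W v)| * jv v ^ 2
      ≤ ∫ v, 2 ^ 12 * A * T * (φ v + t ^ 3 * φ (x - t • v)) :=
        integral_mono_of_nonneg (ae_of_all _ fun v => by positivity) ((hφ.add hψ).const_mul _)
          (ae_of_all _ fun v => abs_mul_jv_sq_le hA.le hg' ht x v _ _ (hY v) (hW v))
    _ = 2 ^ 12 * A * T * (I + ∫ v, t ^ 3 * φ (x - t • v)) := by
        rw [integral_const_mul, integral_add hφ hψ]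
    _ ≤ 2 ^ 12 * A * T * (I + I) := by gcongr; exact integral_pow_mul_comp_sub_smul_le hφ0 x ht
    _ ≤ (2 ^ 13 * I + 1) * A * T := by nlinarith [mul_nonneg hA.le hT]

end
end

section
/- Let β₁ and β₂ be real numbers with β₂ ≥ 3 and β₁ ≥ β₂ and β₁ > 4. Then there exists a constant C=C(β₁,β₂) such that for all t≥0 and x∈ℝ³: ∫_0^t ∫_{ℝ³} ⟨t−s, x−y⟩^{−β₁} ⟨s, y⟩^{−β₂} dy ds ≤ C ⟨t,x⟩^{−β₂}. -/
open MeasureTheory Real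

noncomputable section

/-!
Write `D = ⟨t-s, x-y⟩`, `S = ⟨s, y⟩` and `P = ⟨t, x⟩`. The triangle inequality in space-time gives
`P ≤ 2 max D S`. If `D ≤ S` then `S^{-β₂} ≲ P^{-β₂}`; if `S ≤ D` then, as `β₂ ≤ β₁`, the exponents
may be exchanged, `D^{-β₁} S^{-β₂} ≤ D^{-β₂} S^{-β₁}`, and `D^{-β₂} ≲ P^{-β₂}`. Hence
`D^{-β₁} S^{-β₂} ≲ P^{-β₂} (D^{-β₁} + S^{-β₁})`. After the translation `(s, y) ↦ (t-s, x-y)`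
both terms are bounded by the integral of `⟨u, z⟩^{-β₁}` over all of `ℝ × ℝ³`, which is finite:
since `β₁ > 4` it is dominated by the product `(1 + u²)^{-a/2} (1 + |z|²)^{-b/2}`
with `a = (β₁ - 2)/2 > 1` and `b = (β₁ + 2)/2 > 3`.
-/

lemma rpow_neg_le_two_rpow_mul_rpow_neg {P Q β : ℝ} (hP : 0 < P) (hPQ : P ≤ 2 * Q) (hβ : 0 ≤ β) :
    Q ^ (-β) ≤ 2 ^ β * P ^ (-β) := by
  calc Q ^ (-β) ≤ (P / 2) ^ (-β) :=
        rpow_le_rpow_of_nonpos (half_pos hP) (by linarith) (neg_nonpos.mpr hβ)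
    _ = 2 ^ β * P ^ (-β) := by
        rw [div_rpow hP.le zero_le_two, rpow_neg zero_le_two, div_eq_mul_inv, inv_inv, mul_comm]

lemma rpow_neg_mul_rpow_neg_le_swap {S D β₁ β₂ : ℝ} (hS : 0 < S) (hSD : S ≤ D) (h12 : β₂ ≤ β₁) :
    D ^ (-β₁) * S ^ (-β₂) ≤ D ^ (-β₂) * S ^ (-β₁) := by
  have hD : 0 < D := hS.trans_le hSD
  have key : D ^ (-(β₁ - β₂)) ≤ S ^ (-(β₁ - β₂)) :=
    rpow_le_rpow_of_nonpos hS hSD (by linarith)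
  calc D ^ (-β₁) * S ^ (-β₂) = D ^ (-β₂) * S ^ (-β₂) * D ^ (-(β₁ - β₂)) := by
        rw [mul_right_comm, ← rpow_add hD]; ring_nf
    _ ≤ D ^ (-β₂) * S ^ (-β₂) * S ^ (-(β₁ - β₂)) := by gcongr
    _ = D ^ (-β₂) * S ^ (-β₁) := by rw [mul_assoc, ← rpow_add hS]; ring_nf

lemma rpow_neg_mul_rpow_neg_le {D S P β₁ β₂ : ℝ} (hD : 0 < D) (hS : 0 < S) (hP : 0 < P)
    (hPDS : P ≤ 2 * max D S) (h0 : 0 ≤ β₂) (h12 : β₂ ≤ β₁) :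
    D ^ (-β₁) * S ^ (-β₂) ≤ 2 ^ β₂ * P ^ (-β₂) * (D ^ (-β₁) + S ^ (-β₁)) := by
  have hDβ := rpow_nonneg hD.le (-β₁)
  have hSβ := rpow_nonneg hS.le (-β₁)
  rcases le_total D S with hDS | hSD
  · rw [max_eq_right hDS] at hPDS
    calc D ^ (-β₁) * S ^ (-β₂) ≤ D ^ (-β₁) * (2 ^ β₂ * P ^ (-β₂)) := by
          gcongr; exact rpow_neg_le_two_rpow_mul_rpow_neg hP hPDS h0
      _ ≤ 2 ^ β₂ * P ^ (-β₂) * (D ^ (-β₁) + S ^ (-β₁)) := by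
          rw [mul_comm]; gcongr; linarith
  · rw [max_eq_left hSD] at hPDS
    calc D ^ (-β₁) * S ^ (-β₂) ≤ D ^ (-β₂) * S ^ (-β₁) := rpow_neg_mul_rpow_neg_le_swap hS hSD h12
      _ ≤ 2 ^ β₂ * P ^ (-β₂) * S ^ (-β₁) := by
          gcongr; exact rpow_neg_le_two_rpow_mul_rpow_neg hP hPDS h0
      _ ≤ 2 ^ β₂ * P ^ (-β₂) * (D ^ (-β₁) + S ^ (-β₁)) := by gcongr; linarith

lemma jtx_sq (t : ℝ) (x : E3) : jtx t x ^ 2 = 1 + t ^ 2 + ‖x‖ ^ 2 :=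
  sq_sqrt (by positivity)

lemma jtx_rpow (t : ℝ) (x : E3) (r : ℝ) : jtx t x ^ r = (1 + t ^ 2 + ‖x‖ ^ 2) ^ (r / 2) := by
  rw [jtx, sqrt_eq_rpow, ← rpow_mul (by positivity), one_div_mul_eq_div]

lemma jtx_le_two_mul_max (t s : ℝ) (x y : E3) :
    jtx t x ≤ 2 * max (jtx (t - s) (x - y)) (jtx s y) := by
  have hxy : ‖x‖ ≤ ‖x - y‖ + ‖y‖ := norm_le_norm_sub_add x y
  have hD := le_max_left (jtx (t - s) (x - y)) (jtx s y)
  have hS := le_max_right (jtx (t - s) (x - y)) (jtx s y)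
  have hM : 0 ≤ max (jtx (t - s) (x - y)) (jtx s y) := (jtx_pos s y).le.trans hS
  rw [← pow_le_pow_iff_left₀ (jtx_pos t x).le (by positivity) two_ne_zero, mul_pow, jtx_sq]
  have hD2 := pow_le_pow_left₀ (jtx_pos _ _).le hD 2
  have hS2 := pow_le_pow_left₀ (jtx_pos _ _).le hS 2
  rw [jtx_sq] at hD2 hS2
  nlinarith [sq_nonneg (t - 2 * s), sq_nonneg (‖x - y‖ - ‖y‖), norm_nonneg x,
    mul_self_le_mul_self (norm_nonneg x) hxy]

lemma jtx_rpow_neg_le_mul {a b r : ℝ} (ha : 0 ≤ a) (hb : 0 ≤ b) (hab : a + b = r)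
    (u : ℝ) (z : E3) :
    jtx u z ^ (-r) ≤ (1 + u ^ 2) ^ (-a / 2) * (1 + ‖z‖ ^ 2) ^ (-b / 2) := by
  have hsplit : -r / 2 = -a / 2 + -b / 2 := by rw [← hab]; ring
  rw [jtx_rpow, hsplit, rpow_add (by positivity)]
  gcongr ?_ * ?_ <;> refine rpow_le_rpow_of_nonpos (by positivity) ?_ (by linarith) <;>
    nlinarith [sq_nonneg u, sq_nonneg ‖z‖]

lemma integral_one_add_norm_sq_rpow_neg_pos {E : Type*} [NormedAddCommGroup E] [NormedSpace ℝ E]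
    [FiniteDimensional ℝ E] [MeasurableSpace E] [BorelSpace E] {μ : Measure E}
    [μ.IsAddHaarMeasure] {r : ℝ} (hr : Module.finrank ℝ E < r) :
    0 < ∫ x, (1 + ‖x‖ ^ 2) ^ (-r / 2) ∂μ := by
  have hcont : Continuous fun x : E => (1 + ‖x‖ ^ 2) ^ (-r / 2) :=
    (continuous_const.add (continuous_norm.pow 2)).rpow_const fun x =>
      .inl (by positivity : (0 : ℝ) < 1 + ‖x‖ ^ 2).ne'
  exact integral_pos_of_integrable_nonneg_nonzero (x := 0) hcont
    (integrable_rpow_neg_one_add_norm_sq hr) (fun _ => by positivity) (by simp)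

lemma intervalIntegral_integral_le_of_le_add_mul {G : Type*} [AddGroup G] [MeasurableSpace G]
    [MeasurableAdd G] [MeasurableNeg G] {μ : Measure G} [μ.IsAddLeftInvariant]
    [μ.IsNegInvariant] {g : ℝ → ℝ} {h : G → ℝ} (hg : Integrable g)
    (hh : Integrable h μ) (hg0 : 0 ≤ g) (hh0 : 0 ≤ h) {F : ℝ → G → ℝ}
    (hF0 : ∀ s y, 0 ≤ F s y) {c t : ℝ} {x : G} (hc : 0 ≤ c) (ht : 0 ≤ t)
    (hF : ∀ s y, F s y ≤ c * (g (t - s) * h (x - y) + g s * h y)) :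
    ∫ s in (0 : ℝ)..t, ∫ y, F s y ∂μ ≤ c * (2 * (∫ u, g u) * ∫ y, h y ∂μ) := by
  have hK : 0 ≤ ∫ y, h y ∂μ := integral_nonneg hh0
  have hbound : Integrable (fun s => c * ((g (t - s) + g s) * ∫ y, h y ∂μ)) :=
    (((hg.comp_sub_left t).add hg).mul_const _).const_mul c
  have hinner (s : ℝ) : ∫ y, F s y ∂μ ≤ c * ((g (t - s) + g s) * ∫ y, h y ∂μ) := by
    have hI₁ : Integrable (fun y => g (t - s) * h (x - y)) μ := (hh.comp_sub_left x).const_mul _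
    have hI₂ : Integrable (fun y => g s * h y) μ := hh.const_mul _
    have hI : Integrable (fun y => c * (g (t - s) * h (x - y) + g s * h y)) μ :=
      (hI₁.add hI₂).const_mul c
    refine (integral_mono_of_nonneg (ae_of_all _ (hF0 s)) hI (ae_of_all _ (hF s))).trans_eq ?_
    rw [integral_const_mul, integral_add hI₁ hI₂, integral_const_mul, integral_const_mul,
      integral_sub_left_eq_self h μ x]
    ring
  calc ∫ s in (0 : ℝ)..t, ∫ y, F s y ∂μ
      = ∫ s in Set.Ioc 0 t, ∫ y, F s y ∂μ := intervalIntegral.integral_of_le ht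
    _ ≤ ∫ s in Set.Ioc 0 t, c * ((g (t - s) + g s) * ∫ y, h y ∂μ) :=
        integral_mono_of_nonneg (ae_of_all _ fun s => integral_nonneg (hF0 s))
          hbound.integrableOn (ae_of_all _ hinner)
    _ ≤ ∫ s, c * ((g (t - s) + g s) * ∫ y, h y ∂μ) :=
        setIntegral_le_integral hbound (ae_of_all _ fun s =>
          mul_nonneg hc (mul_nonneg (add_nonneg (hg0 _) (hg0 _)) hK))
    _ = c * (2 * (∫ u, g u) * ∫ y, h y ∂μ) := by
        rw [integral_const_mul, integral_mul_const, integral_add (hg.comp_sub_left t) hg,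
          integral_sub_left_eq_self g volume t]
        ring

/-- For `β₂ ≥ 3`, `β₁ ≥ β₂`, `β₁ > 4` there is `C = C(β₁,β₂)` such that for all
`t ≥ 0`, `x ∈ ℝ³`, `∫_0^t ∫_{ℝ³} ⟨t−s,x−y⟩^{−β₁} ⟨s,y⟩^{−β₂} dy ds ≤ C ⟨t,x⟩^{−β₂}`. -/
theorem stmt5 (β₁ β₂ : ℝ) (h2 : 3 ≤ β₂) (h12 : β₂ ≤ β₁) (h4 : 4 < β₁) :
    ∃ C : ℝ, 0 < C ∧ ∀ t : ℝ, 0 ≤ t → ∀ x : E3,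
      (∫ s in (0:ℝ)..t, ∫ y : E3, jtx (t - s) (x - y) ^ (-β₁) * jtx s y ^ (-β₂)) ≤
        C * jtx t x ^ (-β₂) := by
  obtain ⟨a, b, ha, hb, hab⟩ : ∃ a b : ℝ, 1 < a ∧ 3 < b ∧ a + b = β₁ :=
    ⟨(β₁ - 2) / 2, (β₁ + 2) / 2, by linarith, by linarith, by ring⟩
  set g : ℝ → ℝ := fun u => (1 + ‖u‖ ^ 2) ^ (-a / 2)
  set h : E3 → ℝ := fun z => (1 + ‖z‖ ^ 2) ^ (-b / 2)
  have hg : Integrable g := integrable_rpow_neg_one_add_norm_sq (by simpa using ha)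
  have hh : Integrable h := integrable_rpow_neg_one_add_norm_sq (by simpa using hb)
  have hg_pos : 0 < ∫ u, g u := integral_one_add_norm_sq_rpow_neg_pos (by simpa using ha)
  have hh_pos : 0 < ∫ z, h z := integral_one_add_norm_sq_rpow_neg_pos (by simpa using hb)
  have hgh (u : ℝ) (z : E3) : jtx u z ^ (-β₁) ≤ g u * h z := by
    simpa only [g, h, norm_eq_abs, sq_abs] using
      jtx_rpow_neg_le_mul (by linarith) (by linarith) hab u z
  refine ⟨2 ^ β₂ * (2 * (∫ u, g u) * ∫ z, h z), by positivity, fun t ht x => ?_⟩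
  have hc : 0 ≤ 2 ^ β₂ * jtx t x ^ (-β₂) := by unfold jtx; positivity
  calc _ ≤ 2 ^ β₂ * jtx t x ^ (-β₂) * (2 * (∫ u, g u) * ∫ z, h z) :=
        intervalIntegral_integral_le_of_le_add_mul hg hh (fun _ => by positivity)
          (fun _ => by positivity) (fun s y => by unfold jtx; positivity) hc ht fun s y =>
          (rpow_neg_mul_rpow_neg_le (jtx_pos _ _) (jtx_pos _ _) (jtx_pos _ _)
            (jtx_le_two_mul_max t s x y) (by linarith) h12).trans
          (mul_le_mul_of_nonneg_left (add_le_add (hgh _ _) (hgh _ _)) hc)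
    _ = _ := by ring

end
end

section
/- Let β₂ be a real number with 3 ≤ β₂ ≤ 4. Then there exists a constant C=C(β₂) such that for all t≥0 and x∈ℝ³: ∫_0^t ∫_{ℝ³} ⟨t−s, x−y⟩^{−4} ⟨s, y⟩^{−β₂} dy ds ≤ C log(2+t+|x|) ⟨t,x⟩^{−β₂}. -/
open MeasureTheory Real

noncomputable section

lemma one_le_jtx (t : ℝ) (x : E3) : 1 ≤ jtx t x := by
  rw [jtx]
  nlinarith [Real.sq_sqrt (show (0:ℝ) ≤ 1 + t ^ 2 + ‖x‖ ^ 2 by positivity),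
    Real.sqrt_nonneg (1 + t ^ 2 + ‖x‖ ^ 2), sq_nonneg t, sq_nonneg ‖x‖]

lemma jtx_neg4 (t : ℝ) (x : E3) :
    jtx t x ^ (-(4:ℝ)) = (1 + t ^ 2 + ‖x‖ ^ 2) ^ (-(2:ℝ)) := by
  have h : (0:ℝ) ≤ 1 + t ^ 2 + ‖x‖ ^ 2 := by positivity
  rw [jtx, Real.sqrt_eq_rpow, ← Real.rpow_mul h]
  norm_num

lemma jtx_triangle (a s : ℝ) (u v : E3) : jtx (a + s) (u + v) ≤ jtx a u + jtx s v := by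
  have hm := norm_add_le u v
  have hX : (0:ℝ) ≤ 1 + a ^ 2 + ‖u‖ ^ 2 := by positivity
  have hY : (0:ℝ) ≤ 1 + s ^ 2 + ‖v‖ ^ 2 := by positivity
  set m := ‖u‖ with hmdef; set n := ‖v‖ with hndef
  have hm0 : 0 ≤ m := norm_nonneg u
  have hn0 : 0 ≤ n := norm_nonneg v
  have h1 : jtx (a+s) (u+v) ≤ Real.sqrt (1 + (a+s)^2 + (m+n)^2) := by
    apply Real.sqrt_le_sqrt
    have : ‖u + v‖^2 ≤ (m+n)^2 := by nlinarith [norm_nonneg (u+v)]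
    linarith
  refine h1.trans ?_
  have hcs : (1 + a*s + m*n)^2 ≤ (1 + a^2 + m^2) * (1 + s^2 + n^2) := by
    nlinarith [sq_nonneg (a - s), sq_nonneg (m - n), sq_nonneg (a*n - s*m)]
  have hsq : Real.sqrt ((1 + a^2 + m^2) * (1 + s^2 + n^2)) ≥ 1 + a*s + m*n := by
    calc Real.sqrt ((1 + a^2 + m^2) * (1 + s^2 + n^2)) ≥ Real.sqrt ((1 + a*s + m*n)^2) :=
          Real.sqrt_le_sqrt hcs
      _ = |1 + a*s + m*n| := Real.sqrt_sq_eq_abs _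
      _ ≥ 1 + a*s + m*n := le_abs_self _
  have key : 1 + (a+s)^2 + (m+n)^2 ≤ (jtx a u + jtx s v)^2 := by
    have e1 : (jtx a u + jtx s v)^2
        = (1 + a^2 + m^2) + (1 + s^2 + n^2) + 2 * Real.sqrt ((1+a^2+m^2)*(1+s^2+n^2)) := by
      rw [add_sq, jtx, jtx, Real.sq_sqrt hX, Real.sq_sqrt hY, ← hmdef, ← hndef, mul_assoc,
        ← Real.sqrt_mul hX]
      ring
    nlinarith [hsq]
  calc Real.sqrt (1 + (a+s)^2 + (m+n)^2) ≤ Real.sqrt ((jtx a u + jtx s v)^2) :=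
        Real.sqrt_le_sqrt key
    _ = jtx a u + jtx s v := Real.sqrt_sq (add_nonneg (jtx_pos a u).le (jtx_pos s v).le)

lemma key_pointwise (b : ℝ) (h1 : 3 ≤ b) (h2 : b ≤ 4) {P Q A : ℝ}
    (hP : 1 ≤ P) (hQ : 1 ≤ Q) (hA : 1 ≤ A) (htri : A ≤ P + Q) :
    P ^ (-(4:ℝ)) * Q ^ (-b) ≤ 2 ^ b * A ^ (-b) * (P ^ (-(4:ℝ)) + Q ^ (-(4:ℝ))) := by
  have hP0 : (0:ℝ) < P := by linarith
  have hQ0 : (0:ℝ) < Q := by linarith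
  have hA0 : (0:ℝ) < A := by linarith
  have hA2 : (0:ℝ) < A / 2 := by linarith
  have hhalf : (A / 2) ^ (-b) = 2 ^ b * A ^ (-b) := by
    rw [Real.div_rpow hA0.le (by norm_num : (0:ℝ) ≤ 2), Real.rpow_neg hA0.le,
      Real.rpow_neg (by norm_num : (0:ℝ) ≤ 2)]
    field_simp
  have hbneg : -b ≤ 0 := by linarith
  by_cases hc : A / 2 ≤ Q
  · have hQb : Q ^ (-b) ≤ (A / 2) ^ (-b) := Real.rpow_le_rpow_of_nonpos hA2 hc hbneg
    have hPn : (0:ℝ) ≤ P ^ (-(4:ℝ)) := Real.rpow_nonneg hP0.le _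
    calc P ^ (-(4:ℝ)) * Q ^ (-b) ≤ P ^ (-(4:ℝ)) * ((A/2) ^ (-b)) := by
          exact mul_le_mul_of_nonneg_left hQb hPn
      _ = 2 ^ b * A ^ (-b) * P ^ (-(4:ℝ)) := by rw [hhalf]; ring
      _ ≤ 2 ^ b * A ^ (-b) * (P ^ (-(4:ℝ)) + Q ^ (-(4:ℝ))) := by
          have : (0:ℝ) ≤ Q ^ (-(4:ℝ)) := Real.rpow_nonneg hQ0.le _
          have h2 : (0:ℝ) ≤ 2 ^ b * A ^ (-b) :=
            mul_nonneg (Real.rpow_nonneg (by norm_num) _) (Real.rpow_nonneg hA0.le _)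
          nlinarith
  · push_neg at hc
    have hPA : A / 2 ≤ P := by linarith
    have hQP : Q ≤ P := by linarith
    have hsplit : P ^ (-(4:ℝ)) = P ^ (-b) * P ^ (b - 4) := by
      rw [← Real.rpow_add hP0]; congr 1; ring
    have hPb : P ^ (-b) ≤ (A / 2) ^ (-b) := Real.rpow_le_rpow_of_nonpos hA2 hPA hbneg
    have hPQ : P ^ (b - 4) ≤ Q ^ (b - 4) :=
      Real.rpow_le_rpow_of_nonpos hQ0 hQP (by linarith)
    have hQQ : Q ^ (b - 4) * Q ^ (-b) = Q ^ (-(4:ℝ)) := by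
      rw [← Real.rpow_add hQ0]; congr 1; ring
    have hQbn : (0:ℝ) ≤ Q ^ (-b) := Real.rpow_nonneg hQ0.le _
    have hPbn : (0:ℝ) ≤ P ^ (-b) := Real.rpow_nonneg hP0.le _
    have hPq4 : (0:ℝ) ≤ P ^ (b-4) := Real.rpow_nonneg hP0.le _
    calc P ^ (-(4:ℝ)) * Q ^ (-b) = P ^ (-b) * (P ^ (b-4) * Q ^ (-b)) := by rw [hsplit]; ring
      _ ≤ (A/2) ^ (-b) * (Q ^ (b-4) * Q ^ (-b)) := by
          apply mul_le_mul hPb (mul_le_mul_of_nonneg_right hPQ hQbn)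
            (by positivity) (Real.rpow_nonneg hA2.le _)
      _ = 2 ^ b * A ^ (-b) * Q ^ (-(4:ℝ)) := by rw [hhalf, hQQ]
      _ ≤ 2 ^ b * A ^ (-b) * (P ^ (-(4:ℝ)) + Q ^ (-(4:ℝ))) := by
          have : (0:ℝ) ≤ P ^ (-(4:ℝ)) := Real.rpow_nonneg hP0.le _
          have h2 : (0:ℝ) ≤ 2 ^ b * A ^ (-b) :=
            mul_nonneg (Real.rpow_nonneg (by norm_num) _) (Real.rpow_nonneg hA0.le _)
          nlinarith

lemma integrable_pow2 {c : ℝ} (hc : 1 ≤ c) :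
    Integrable (fun z : E3 => (c + ‖z‖ ^ 2) ^ (-(2:ℝ))) := by
  have h4 : ((Module.finrank ℝ E3 : ℝ)) < 4 := by
    simp [finrank_euclideanSpace]; norm_num
  have hbase : Integrable (fun z : E3 => ((1:ℝ) + ‖z‖ ^ 2) ^ ((-4:ℝ) / 2)) :=
    integrable_rpow_neg_one_add_norm_sq h4
  have hbase' : Integrable (fun z : E3 => ((1:ℝ) + ‖z‖ ^ 2) ^ (-(2:ℝ))) := by
    convert hbase using 2; norm_num
  refine hbase'.mono' (Measurable.aestronglyMeasurable (by fun_prop)) ?_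
  filter_upwards with z
  have h1 : (0:ℝ) < 1 + ‖z‖ ^ 2 := by positivity
  have hle : (1:ℝ) + ‖z‖ ^ 2 ≤ c + ‖z‖ ^ 2 := by linarith
  rw [Real.norm_eq_abs, abs_of_nonneg (Real.rpow_nonneg (by positivity) _)]
  exact Real.rpow_le_rpow_of_nonpos h1 hle (by norm_num)

lemma integral_pow2 {M : ℝ} (hM : 1 ≤ M) :
    ∫ z : E3, (M ^ 2 + ‖z‖ ^ 2) ^ (-(2:ℝ)) =
      M⁻¹ * ∫ z : E3, ((1:ℝ) + ‖z‖ ^ 2) ^ (-(2:ℝ)) := by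
  have hM0 : (0:ℝ) < M := by linarith
  have h := MeasureTheory.Measure.integral_comp_smul (volume : Measure E3)
    (fun w : E3 => ((1:ℝ) + ‖w‖ ^ 2) ^ (-(2:ℝ))) M⁻¹
  have heq : ∀ z : E3, ((1:ℝ) + ‖M⁻¹ • z‖ ^ 2) ^ (-(2:ℝ))
      = M ^ 4 * (M ^ 2 + ‖z‖ ^ 2) ^ (-(2:ℝ)) := by
    intro z
    have hnorm : ‖M⁻¹ • z‖ = M⁻¹ * ‖z‖ := by
      rw [norm_smul, Real.norm_eq_abs, abs_of_pos (by positivity)]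
    have harg : (1:ℝ) + ‖M⁻¹ • z‖ ^ 2 = (M ^ 2 + ‖z‖ ^ 2) / M ^ 2 := by
      rw [hnorm]; field_simp
    have h2 : ((M:ℝ) ^ 2) ^ (-(2:ℝ)) = (M ^ 4)⁻¹ := by
      rw [Real.rpow_neg (by positivity)]
      congr 1
      rw [show ((2:ℝ)) = ((2:ℕ):ℝ) by norm_num, Real.rpow_natCast]
      ring
    rw [harg, Real.div_rpow (by positivity) (by positivity), h2, div_eq_mul_inv, inv_inv]
    ring
  simp only [heq] at h
  rw [integral_const_mul] at h
  have hfin : Module.finrank ℝ E3 = 3 := finrank_euclideanSpace_fin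
  rw [hfin] at h
  have habs : |((M⁻¹ : ℝ) ^ 3)⁻¹| = M ^ 3 := by
    rw [abs_of_pos (by positivity)]; field_simp
  rw [habs, smul_eq_mul] at h
  have h3 : (M:ℝ) ^ 3 ≠ 0 := by positivity
  have hMK : M * ∫ z : E3, (M ^ 2 + ‖z‖ ^ 2) ^ (-(2:ℝ))
      = ∫ z : E3, ((1:ℝ) + ‖z‖ ^ 2) ^ (-(2:ℝ)) :=
    mul_left_cancel₀ h3 (by linear_combination h)
  rw [← hMK]
  field_simp

lemma inv_sqrt_le {σ : ℝ} (hσ : 0 ≤ σ) : (Real.sqrt (1 + σ ^ 2))⁻¹ ≤ 2 * (1 + σ)⁻¹ := by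
  have h2 : (0:ℝ) < (1 + σ) / 2 := by positivity
  have h1 : (1 + σ) / 2 ≤ Real.sqrt (1 + σ ^ 2) := by
    rw [show (1 + σ) / 2 = Real.sqrt (((1 + σ) / 2) ^ 2) from (Real.sqrt_sq h2.le).symm]
    apply Real.sqrt_le_sqrt
    nlinarith [sq_nonneg (1 - σ)]
  calc (Real.sqrt (1 + σ ^ 2))⁻¹ ≤ ((1 + σ) / 2)⁻¹ := by
        apply inv_anti₀ h2 h1
    _ = 2 * (1 + σ)⁻¹ := by rw [inv_div]; ring

/-- For `3 ≤ β₂ ≤ 4` there is `C = C(β₂)` such that for all `t ≥ 0`, `x ∈ ℝ³`,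
`∫_0^t ∫_{ℝ³} ⟨t−s,x−y⟩^{−4} ⟨s,y⟩^{−β₂} dy ds ≤ C log(2+t+|x|) ⟨t,x⟩^{−β₂}`. -/
theorem stmt6 (β₂ : ℝ) (h1 : 3 ≤ β₂) (h2 : β₂ ≤ 4) :
    ∃ C : ℝ, 0 < C ∧ ∀ t : ℝ, 0 ≤ t → ∀ x : E3,
      (∫ s in (0:ℝ)..t, ∫ y : E3, jtx (t - s) (x - y) ^ (-(4:ℝ)) * jtx s y ^ (-β₂)) ≤
        C * Real.log (2 + t + ‖x‖) * jtx t x ^ (-β₂) := by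
  classical
  set K₀ := ∫ z : E3, ((1:ℝ) + ‖z‖ ^ 2) ^ (-(2:ℝ)) with hKdef
  have hK0 : 0 ≤ K₀ := integral_nonneg fun z => Real.rpow_nonneg (by positivity) _
  refine ⟨64 * K₀ + 1, by positivity, ?_⟩
  intro t ht x
  have hA1 : 1 ≤ jtx t x := one_le_jtx t x
  have hA0 : 0 < jtx t x := jtx_pos t x
  have hAb : 0 ≤ jtx t x ^ (-β₂) := Real.rpow_nonneg hA0.le _
  have h2b : (2:ℝ) ^ β₂ ≤ 16 := by
    calc (2:ℝ) ^ β₂ ≤ 2 ^ (4:ℝ) := Real.rpow_le_rpow_of_exponent_le (by norm_num) h2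
      _ = 16 := by
          rw [show ((4:ℝ)) = ((4:ℕ):ℝ) by norm_num, Real.rpow_natCast]; norm_num
  have h2b0 : (0:ℝ) ≤ (2:ℝ) ^ β₂ := Real.rpow_nonneg (by norm_num) _
  set F : ℝ → ℝ := fun s => ∫ y : E3, jtx (t - s) (x - y) ^ (-(4:ℝ)) * jtx s y ^ (-β₂)
    with hFdef
  set D : ℝ → ℝ := fun s =>
    32 * (jtx t x ^ (-β₂) * K₀) * ((1 + (t - s))⁻¹ + (1 + s)⁻¹) with hDdef
  -- inner integral bound valid for every s
  have hFle : ∀ s : ℝ, F s ≤ 2 ^ β₂ * jtx t x ^ (-β₂) * K₀ *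
      ((Real.sqrt (1 + (t - s) ^ 2))⁻¹ + (Real.sqrt (1 + s ^ 2))⁻¹) := by
    intro s
    have hc1 : (1:ℝ) ≤ 1 + (t - s) ^ 2 := by nlinarith [sq_nonneg (t - s)]
    have hc2 : (1:ℝ) ≤ 1 + s ^ 2 := by nlinarith [sq_nonneg s]
    have hg1 : Integrable (fun y : E3 => (1 + (t - s) ^ 2 + ‖x - y‖ ^ 2) ^ (-(2:ℝ))) :=
      (integrable_comp_sub_left
        (fun z : E3 => (1 + (t - s) ^ 2 + ‖z‖ ^ 2) ^ (-(2:ℝ))) x).2 (integrable_pow2 hc1)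
    have hg2 : Integrable (fun y : E3 => (1 + s ^ 2 + ‖y‖ ^ 2) ^ (-(2:ℝ))) :=
      integrable_pow2 hc2
    have hdom : Integrable (fun y : E3 => 2 ^ β₂ * jtx t x ^ (-β₂) *
        ((1 + (t - s) ^ 2 + ‖x - y‖ ^ 2) ^ (-(2:ℝ)) + (1 + s ^ 2 + ‖y‖ ^ 2) ^ (-(2:ℝ)))) :=
      (hg1.add hg2).const_mul _
    have hpt : ∀ y : E3, jtx (t - s) (x - y) ^ (-(4:ℝ)) * jtx s y ^ (-β₂)
        ≤ 2 ^ β₂ * jtx t x ^ (-β₂) *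
          ((1 + (t - s) ^ 2 + ‖x - y‖ ^ 2) ^ (-(2:ℝ)) + (1 + s ^ 2 + ‖y‖ ^ 2) ^ (-(2:ℝ))) := by
      intro y
      have htri : jtx t x ≤ jtx (t - s) (x - y) + jtx s y := by
        have h := jtx_triangle (t - s) s (x - y) y
        rwa [sub_add_cancel, sub_add_cancel] at h
      have h := key_pointwise β₂ h1 h2 (one_le_jtx (t - s) (x - y)) (one_le_jtx s y) hA1 htri
      rw [← jtx_neg4 (t - s) (x - y), ← jtx_neg4 s y]
      exact h
    have hmeas : Continuous (fun y : E3 =>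
        jtx (t - s) (x - y) ^ (-(4:ℝ)) * jtx s y ^ (-β₂)) := by
      apply Continuous.mul
      · apply Continuous.rpow_const (by unfold jtx; fun_prop)
        intro p; exact Or.inl (jtx_pos _ _).ne'
      · apply Continuous.rpow_const (by unfold jtx; fun_prop)
        intro p; exact Or.inl (jtx_pos _ _).ne'
    have hint : Integrable (fun y : E3 =>
        jtx (t - s) (x - y) ^ (-(4:ℝ)) * jtx s y ^ (-β₂)) := by
      refine hdom.mono' hmeas.aestronglyMeasurable ?_
      filter_upwards with y
      have hnn : (0:ℝ) ≤ jtx (t - s) (x - y) ^ (-(4:ℝ)) * jtx s y ^ (-β₂) :=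
        mul_nonneg (Real.rpow_nonneg (jtx_pos _ _).le _) (Real.rpow_nonneg (jtx_pos _ _).le _)
      rw [Real.norm_eq_abs, abs_of_nonneg hnn]
      exact hpt y
    have hval1 : ∫ y : E3, (1 + (t - s) ^ 2 + ‖x - y‖ ^ 2) ^ (-(2:ℝ))
        = (Real.sqrt (1 + (t - s) ^ 2))⁻¹ * K₀ := by
      have htrans : ∫ y : E3, (1 + (t - s) ^ 2 + ‖x - y‖ ^ 2) ^ (-(2:ℝ))
          = ∫ z : E3, (1 + (t - s) ^ 2 + ‖z‖ ^ 2) ^ (-(2:ℝ)) :=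
        integral_sub_left_eq_self (fun z : E3 => (1 + (t - s) ^ 2 + ‖z‖ ^ 2) ^ (-(2:ℝ)))
          volume x
      have hMs : 1 ≤ Real.sqrt (1 + (t - s) ^ 2) := by
        have h' := Real.sqrt_le_sqrt hc1
        rwa [Real.sqrt_one] at h'
      have hsq : Real.sqrt (1 + (t - s) ^ 2) ^ 2 = 1 + (t - s) ^ 2 :=
        Real.sq_sqrt (by positivity)
      have := integral_pow2 hMs
      rw [hsq] at this
      rw [htrans, this]
    have hval2 : ∫ y : E3, (1 + s ^ 2 + ‖y‖ ^ 2) ^ (-(2:ℝ))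
        = (Real.sqrt (1 + s ^ 2))⁻¹ * K₀ := by
      have hMs : 1 ≤ Real.sqrt (1 + s ^ 2) := by
        have h' := Real.sqrt_le_sqrt hc2
        rwa [Real.sqrt_one] at h'
      have hsq : Real.sqrt (1 + s ^ 2) ^ 2 = 1 + s ^ 2 := Real.sq_sqrt (by positivity)
      have := integral_pow2 hMs
      rw [hsq] at this
      rw [this]
    calc F s ≤ ∫ y : E3, 2 ^ β₂ * jtx t x ^ (-β₂) *
          ((1 + (t - s) ^ 2 + ‖x - y‖ ^ 2) ^ (-(2:ℝ)) + (1 + s ^ 2 + ‖y‖ ^ 2) ^ (-(2:ℝ))) :=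
          integral_mono hint hdom hpt
      _ = 2 ^ β₂ * jtx t x ^ (-β₂) *
          ((∫ y : E3, (1 + (t - s) ^ 2 + ‖x - y‖ ^ 2) ^ (-(2:ℝ))) +
            ∫ y : E3, (1 + s ^ 2 + ‖y‖ ^ 2) ^ (-(2:ℝ))) := by
          rw [integral_const_mul, integral_add hg1 hg2]
      _ = 2 ^ β₂ * jtx t x ^ (-β₂) * K₀ *
          ((Real.sqrt (1 + (t - s) ^ 2))⁻¹ + (Real.sqrt (1 + s ^ 2))⁻¹) := by
          rw [hval1, hval2]; ring
  have hFnn : ∀ s : ℝ, 0 ≤ F s := by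
    intro s
    exact integral_nonneg fun y =>
      mul_nonneg (Real.rpow_nonneg (jtx_pos _ _).le _) (Real.rpow_nonneg (jtx_pos _ _).le _)
  have hFD : ∀ s ∈ Set.Icc (0:ℝ) t, F s ≤ D s := by
    intro s hs
    obtain ⟨hs0, hst⟩ := hs
    have ha := inv_sqrt_le (show (0:ℝ) ≤ t - s by linarith)
    have hb := inv_sqrt_le hs0
    have hia : (0:ℝ) ≤ (Real.sqrt (1 + (t - s) ^ 2))⁻¹ := by positivity
    have hib : (0:ℝ) ≤ (Real.sqrt (1 + s ^ 2))⁻¹ := by positivity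
    have hAK : (0:ℝ) ≤ jtx t x ^ (-β₂) * K₀ := mul_nonneg hAb hK0
    calc F s ≤ 2 ^ β₂ * jtx t x ^ (-β₂) * K₀ *
          ((Real.sqrt (1 + (t - s) ^ 2))⁻¹ + (Real.sqrt (1 + s ^ 2))⁻¹) := hFle s
      _ = (2 ^ β₂ * ((Real.sqrt (1 + (t - s) ^ 2))⁻¹ + (Real.sqrt (1 + s ^ 2))⁻¹)) *
          (jtx t x ^ (-β₂) * K₀) := by ring
      _ ≤ (32 * ((1 + (t - s))⁻¹ + (1 + s)⁻¹)) * (jtx t x ^ (-β₂) * K₀) := by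
          apply mul_le_mul_of_nonneg_right _ hAK
          nlinarith
      _ = D s := by rw [hDdef]; ring
  -- interval integrability of D
  have hcont1 : ContinuousOn (fun s : ℝ => (1 + (t - s))⁻¹) (Set.uIcc 0 t) := by
    apply ContinuousOn.inv₀ (by fun_prop)
    intro s hs
    rw [Set.uIcc_of_le ht] at hs
    have := hs.2
    have : (0:ℝ) < 1 + (t - s) := by linarith
    exact this.ne'
  have hcont2 : ContinuousOn (fun s : ℝ => (1 + s)⁻¹) (Set.uIcc 0 t) := by
    apply ContinuousOn.inv₀ (by fun_prop)
    intro s hs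
    rw [Set.uIcc_of_le ht] at hs
    have := hs.1
    have : (0:ℝ) < 1 + s := by linarith
    exact this.ne'
  have hint1 : IntervalIntegrable (fun s : ℝ => (1 + (t - s))⁻¹) volume 0 t :=
    hcont1.intervalIntegrable
  have hint2 : IntervalIntegrable (fun s : ℝ => (1 + s)⁻¹) volume 0 t :=
    hcont2.intervalIntegrable
  have hDint : IntervalIntegrable D volume 0 t := by
    have := (hint1.add hint2).const_mul (32 * (jtx t x ^ (-β₂) * K₀))
    simpa [hDdef, mul_add] using this
  -- measurability of F
  have hFmeas : StronglyMeasurable F := by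
    rw [hFdef]
    apply MeasureTheory.StronglyMeasurable.integral_prod_right
      (f := fun (s : ℝ) (y : E3) => jtx (t - s) (x - y) ^ (-(4:ℝ)) * jtx s y ^ (-β₂))
    apply Continuous.stronglyMeasurable
    apply Continuous.mul
    · apply Continuous.rpow_const
      · unfold jtx; fun_prop
      · intro p; exact Or.inl (jtx_pos _ _).ne'
    · apply Continuous.rpow_const
      · unfold jtx; fun_prop
      · intro p; exact Or.inl (jtx_pos _ _).ne'
  have hFint : IntervalIntegrable F volume 0 t := by
    apply hDint.mono_fun' hFmeas.aestronglyMeasurable.restrict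
    filter_upwards [ae_restrict_mem measurableSet_uIoc] with s hs
    rw [Set.uIoc_of_le ht] at hs
    rw [Real.norm_eq_abs, abs_of_nonneg (hFnn s)]
    exact hFD s ⟨hs.1.le, hs.2⟩
  -- value of the outer integral of D
  have hI2 : (∫ s in (0:ℝ)..t, (1 + s)⁻¹) = Real.log (1 + t) := by
    have h := intervalIntegral.integral_comp_add_left (a := (0:ℝ)) (b := t)
      (fun u : ℝ => u⁻¹) 1
    rw [h, integral_inv]
    · norm_num
    · rw [add_zero, Set.uIcc_of_le (by linarith : (1:ℝ) ≤ 1 + t)]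
      intro hmem
      have := hmem.1
      linarith
  have hI1 : (∫ s in (0:ℝ)..t, (1 + (t - s))⁻¹) = Real.log (1 + t) := by
    have h := intervalIntegral.integral_comp_sub_left (a := (0:ℝ)) (b := t)
      (fun u : ℝ => (1 + u)⁻¹) t
    rw [h, sub_self, sub_zero]
    exact hI2
  calc (∫ s in (0:ℝ)..t, F s) ≤ ∫ s in (0:ℝ)..t, D s :=
        intervalIntegral.integral_mono_on ht hFint hDint hFD
    _ = 32 * (jtx t x ^ (-β₂) * K₀) * (Real.log (1 + t) + Real.log (1 + t)) := by
        rw [hDdef]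
        rw [intervalIntegral.integral_const_mul]
        rw [intervalIntegral.integral_add hint1 hint2, hI1, hI2]
    _ ≤ (64 * K₀ + 1) * Real.log (2 + t + ‖x‖) * jtx t x ^ (-β₂) := by
        have hlog1 : 0 ≤ Real.log (1 + t) := Real.log_nonneg (by linarith)
        have hlog2 : Real.log (1 + t) ≤ Real.log (2 + t + ‖x‖) :=
          Real.log_le_log (by linarith) (by linarith [norm_nonneg x])
        have hlog3 : 0 ≤ Real.log (2 + t + ‖x‖) := le_trans hlog1 hlog2
        nlinarith [mul_nonneg (mul_nonneg hK0 hAb) (sub_nonneg.2 hlog2),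
          mul_nonneg hlog3 hAb, mul_nonneg hK0 hAb]

end
end

section
/- Let n>0. There exists a constant C=C(n) such that for all t≥0 and x∈ℝ³: ∫_{ℝ³} (1+|x−tv|²+|v|²)^{−(n+3)/2} dv ≤ C ⟨t⟩^{−3} ( 1 + |x|²/(1+t²) )^{−n/2}. -/
open MeasureTheory Real

noncomputable section

/-! Completing the square in `v`,
`1 + ‖x - t v‖² + ‖v‖² = (1 + ‖x‖²/⟨t⟩²) + ⟨t⟩² ‖v - t x/⟨t⟩²‖²`,
so a translation and a dilation compute the integral exactly: it equals
`⟨t⟩^{-3} (1 + ‖x‖²/⟨t⟩²)^{-n/2} ∫ (1 + ‖v‖²)^{-(n+3)/2} dv`, and the last integral is finite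
because `n + 3 > 3`. -/

open Module

section

variable {E : Type*} [NormedAddCommGroup E] [InnerProductSpace ℝ E]

theorem norm_sub_smul_sq_add_norm_sq (t : ℝ) (x v : E) :
    ‖x - t • v‖ ^ 2 + ‖v‖ ^ 2
      = (1 + t ^ 2) * ‖v - (t / (1 + t ^ 2)) • x‖ ^ 2 + ‖x‖ ^ 2 / (1 + t ^ 2) := by
  rw [norm_sub_sq_real, norm_sub_sq_real]
  simp only [inner_smul_right, norm_smul, mul_pow, Real.norm_eq_abs, sq_abs, real_inner_comm x v]
  field_simp
  ring

variable [FiniteDimensional ℝ E] [MeasurableSpace E] [BorelSpace E]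
  (μ : Measure E) [μ.IsAddHaarMeasure]

theorem integral_rpow_add_mul_norm_sq {s a : ℝ} (hs : 0 < s) (ha : 0 < a) (p : ℝ) :
    ∫ v, (s + a * ‖v‖ ^ 2) ^ p ∂μ
      = a ^ (-(finrank ℝ E / 2 : ℝ)) * s ^ (p + finrank ℝ E / 2) * ∫ v, (1 + ‖v‖ ^ 2) ^ p ∂μ := by
  -- substitute `v = √(s / a) • w`, which turns `s + a ‖v‖²` into `s (1 + ‖w‖²)`
  set c := √(s / a) with hc_def
  have hc : 0 < c := by positivity
  have hsub : ∫ w, (s + a * ‖c • w‖ ^ 2) ^ p ∂μ = s ^ p * ∫ w, (1 + ‖w‖ ^ 2) ^ p ∂μ := by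
    rw [← integral_const_mul]
    congr 1 with w
    rw [norm_smul, mul_pow, norm_of_nonneg hc.le, sq_sqrt (by positivity),
      ← mul_rpow hs.le (by positivity)]
    congr 1
    field_simp
  rw [Measure.integral_comp_smul_of_nonneg μ (fun v => (s + a * ‖v‖ ^ 2) ^ p) c (hR := hc.le),
    smul_eq_mul] at hsub
  have hcd : c ^ finrank ℝ E = a ^ (-(finrank ℝ E / 2 : ℝ)) * s ^ (finrank ℝ E / 2 : ℝ) := by
    rw [hc_def, sqrt_eq_rpow, ← rpow_natCast, ← rpow_mul (by positivity), div_rpow hs.le ha.le,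
      rpow_neg ha.le]
    ring_nf
  rw [← eq_inv_mul_iff_mul_eq₀ (by positivity)] at hsub
  rw [hsub, inv_inv, hcd, rpow_add hs]
  ring

theorem integral_rpow_one_add_norm_sub_smul_sq_add_norm_sq (t : ℝ) (x : E) (p : ℝ) :
    ∫ v, (1 + ‖x - t • v‖ ^ 2 + ‖v‖ ^ 2) ^ p ∂μ
      = (1 + t ^ 2) ^ (-(finrank ℝ E / 2 : ℝ))
        * (1 + ‖x‖ ^ 2 / (1 + t ^ 2)) ^ (p + finrank ℝ E / 2) * ∫ v, (1 + ‖v‖ ^ 2) ^ p ∂μ := by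
  have hcomplete : ∀ v, 1 + ‖x - t • v‖ ^ 2 + ‖v‖ ^ 2
      = (1 + ‖x‖ ^ 2 / (1 + t ^ 2)) + (1 + t ^ 2) * ‖v - (t / (1 + t ^ 2)) • x‖ ^ 2 := by
    intro v
    rw [add_assoc, norm_sub_smul_sq_add_norm_sq]
    ring
  simp_rw [hcomplete]
  rw [integral_sub_right_eq_self
      (fun v => ((1 + ‖x‖ ^ 2 / (1 + t ^ 2)) + (1 + t ^ 2) * ‖v‖ ^ 2) ^ p),
    integral_rpow_add_mul_norm_sq μ (by positivity) (by positivity)]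

theorem integral_rpow_neg_one_add_norm_sq_pos {r : ℝ} (hr : (finrank ℝ E : ℝ) < r) :
    0 < ∫ v, (1 + ‖v‖ ^ 2) ^ (-r / 2) ∂μ := by
  rw [integral_pos_iff_support_of_nonneg (fun v => by positivity)
    (integrable_rpow_neg_one_add_norm_sq (μ := μ) hr),
    Function.support_eq_univ fun v => (rpow_pos_of_pos (by positivity) _).ne']
  exact isOpen_univ.measure_pos μ Set.univ_nonempty

end

/-- For `n > 0` there is `C = C(n)` such that for all `t ≥ 0`, `x ∈ ℝ³`,
`∫_{ℝ³} (1+|x−tv|²+|v|²)^{−(n+3)/2} dv ≤ C ⟨t⟩^{−3} (1+|x|²/(1+t²))^{−n/2}`. -/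
theorem stmt7 (n : ℝ) (hn : 0 < n) :
    ∃ C : ℝ, 0 < C ∧ ∀ t : ℝ, 0 ≤ t → ∀ x : E3,
      (∫ v : E3, (1 + ‖x - t • v‖ ^ 2 + ‖v‖ ^ 2) ^ (-(n + 3) / 2)) ≤
        C * Real.sqrt (1 + t ^ 2) ^ (-(3 : ℝ)) *
          (1 + ‖x‖ ^ 2 / (1 + t ^ 2)) ^ (-n / 2) := by
  have hdim : finrank ℝ E3 = 3 := finrank_euclideanSpace_fin
  have hr : (finrank ℝ E3 : ℝ) < n + 3 := by rw [hdim]; push_cast; linarith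
  refine ⟨_, integral_rpow_neg_one_add_norm_sq_pos volume hr, fun t _ x => le_of_eq ?_⟩
  rw [integral_rpow_one_add_norm_sub_smul_sq_add_norm_sq, hdim, sqrt_eq_rpow,
    ← rpow_mul (by positivity)]
  ring_nf

end
end
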